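/- arXiv:1702.01858 — 2 statements merged into one kernel-verified Lean document; each statement's English description precedes it below -/
import Mathlib

section
/- Let η be the 5×5 Fisher information matrix with entries (times 1/σ²): η₁₁ = N²/2, η₂₂ = N², η₃₃ = A²N²/2, η₃₄ = η₄₃ = η₃₅ = η₅₃ = πA²N²(N−1)/2, η₄₄ = η₅₅ = π²A²N²(N−1)(2N−1)/3, η₄₅ = η₅₄ = π²A²N²(N−1)²/2, and zero elsewhere. Then for N ≥ 2 and A, σ > 0, η is invertible and its inverse equals (σ²/N²) times the matrix with (1,1)-entry 2, (2,2)-entry 1, (3,3)-entry 2(7N−5)/(A²(N+1)), (3,4) = (4,3) = (3,5) = (5,3) = −6/(πA²(N+1)), (4,4) = (5,5) = 6/(π²A²(N²−1)), (4,5) = (5,4) = 0, and all other entries zero. -/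
/-!
Both `η` and the claimed inverse are block diagonal, with a diagonal `2 × 2` block for the
amplitude and offset and a `3 × 3` block for the phase and the two frequencies. Their product is
the identity, and a one-sided inverse of a square matrix is its inverse.
-/

open Real Matrix

namespace FisherSinusoid

/-- The Fisher information matrix of `(A, B, φ, f₀, f₁)` up to the factor `σ⁻²`, with `π`
generalised to `p` and the grid size `N` to a real `n`. -/
noncomputable def fisherInfo (a p n : ℝ) : Matrix (Fin 5) (Fin 5) ℝ :=
  !![n^2/2, 0, 0, 0, 0;
     0, n^2, 0, 0, 0;
     0, 0, a^2*n^2/2, p*a^2*n^2*(n-1)/2, p*a^2*n^2*(n-1)/2;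
     0, 0, p*a^2*n^2*(n-1)/2, p^2*a^2*n^2*(n-1)*(2*n-1)/3, p^2*a^2*n^2*(n-1)^2/2;
     0, 0, p*a^2*n^2*(n-1)/2, p^2*a^2*n^2*(n-1)^2/2, p^2*a^2*n^2*(n-1)*(2*n-1)/3]

noncomputable def fisherInfoInvScaled (a p n : ℝ) : Matrix (Fin 5) (Fin 5) ℝ :=
  !![2, 0, 0, 0, 0;
     0, 1, 0, 0, 0;
     0, 0, 2*(7*n-5)/(a^2*(n+1)), -6/(p*a^2*(n+1)), -6/(p*a^2*(n+1));
     0, 0, -6/(p*a^2*(n+1)), 6/(p^2*a^2*(n^2-1)), 0;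
     0, 0, -6/(p*a^2*(n+1)), 0, 6/(p^2*a^2*(n^2-1))]

theorem fisherInfo_mul_fisherInfoInvScaled {a p n : ℝ} (ha : a ≠ 0) (hp : p ≠ 0)
    (hn₁ : n - 1 ≠ 0) (hn₂ : n + 1 ≠ 0) :
    fisherInfo a p n * fisherInfoInvScaled a p n = n ^ 2 • 1 := by
  have hn : n ^ 2 - 1 ≠ 0 := by
    rw [show n ^ 2 - 1 = (n - 1) * (n + 1) by ring]
    exact mul_ne_zero hn₁ hn₂
  ext i j
  fin_cases i <;> fin_cases j <;>
    simp [fisherInfo, fisherInfoInvScaled, mul_apply, Fin.sum_univ_five, one_apply] <;>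
    field_simp <;> ring

end FisherSinusoid

open FisherSinusoid in
theorem stmt_12 (A σ : ℝ) (hA : 0 < A) (hσ : 0 < σ) (N : ℕ) (hN : 2 ≤ N)
    (η : Matrix (Fin 5) (Fin 5) ℝ)
    (hη : η = (σ^2)⁻¹ •
      !![(N:ℝ)^2/2, 0, 0, 0, 0;
         0, (N:ℝ)^2, 0, 0, 0;
         0, 0, A^2*(N:ℝ)^2/2, π*A^2*(N:ℝ)^2*((N:ℝ)-1)/2, π*A^2*(N:ℝ)^2*((N:ℝ)-1)/2;
         0, 0, π*A^2*(N:ℝ)^2*((N:ℝ)-1)/2, π^2*A^2*(N:ℝ)^2*((N:ℝ)-1)*(2*(N:ℝ)-1)/3,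
           π^2*A^2*(N:ℝ)^2*((N:ℝ)-1)^2/2;
         0, 0, π*A^2*(N:ℝ)^2*((N:ℝ)-1)/2, π^2*A^2*(N:ℝ)^2*((N:ℝ)-1)^2/2,
           π^2*A^2*(N:ℝ)^2*((N:ℝ)-1)*(2*(N:ℝ)-1)/3]) :
    IsUnit η.det ∧
    η⁻¹ = (σ^2/(N:ℝ)^2) •
      !![2, 0, 0, 0, 0;
         0, 1, 0, 0, 0;
         0, 0, 2*(7*(N:ℝ)-5)/(A^2*((N:ℝ)+1)), -6/(π*A^2*((N:ℝ)+1)), -6/(π*A^2*((N:ℝ)+1));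
         0, 0, -6/(π*A^2*((N:ℝ)+1)), 6/(π^2*A^2*((N:ℝ)^2-1)), 0;
         0, 0, -6/(π*A^2*((N:ℝ)+1)), 0, 6/(π^2*A^2*((N:ℝ)^2-1))] := by
  have hN₁ : (1 : ℝ) < N := by exact_mod_cast hN
  have hN₀ : (N : ℝ) ≠ 0 := by positivity
  have hprod : fisherInfo A π N * fisherInfoInvScaled A π N = (N : ℝ) ^ 2 • 1 :=
    fisherInfo_mul_fisherInfoInvScaled hA.ne' pi_ne_zero (by linarith) (by linarith)
  have hright : η * ((σ ^ 2 / (N : ℝ) ^ 2) • fisherInfoInvScaled A π N) = 1 := by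
    rw [hη, ← fisherInfo, smul_mul_smul, hprod, smul_smul]
    field_simp
    exact one_smul ℝ 1
  exact ⟨isUnit_det_of_right_inverse hright, inv_eq_right_inv hright⟩
end

section
/- With the Fisher information matrix η as above (N ≥ 2, A, σ > 0), the Cramér–Rao bounds are: [η⁻¹]₁₁ = 2σ²/N², [η⁻¹]₂₂ = σ²/N², [η⁻¹]₃₃ = 2(7N−5)σ²/(A²N²(N+1)), and [η⁻¹]₄₄ = [η⁻¹]₅₅ = 6σ²/(π²A²N²(N²−1)). -/
set_option maxHeartbeats 2000000


open Real Matrix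

theorem stmt_13 (A σ : ℝ) (hA : 0 < A) (hσ : 0 < σ) (N : ℕ) (hN : 2 ≤ N)
    (η : Matrix (Fin 5) (Fin 5) ℝ)
    (hη : η = (σ^2)⁻¹ •
      !![(N:ℝ)^2/2, 0, 0, 0, 0;
         0, (N:ℝ)^2, 0, 0, 0;
         0, 0, A^2*(N:ℝ)^2/2, π*A^2*(N:ℝ)^2*((N:ℝ)-1)/2, π*A^2*(N:ℝ)^2*((N:ℝ)-1)/2;
         0, 0, π*A^2*(N:ℝ)^2*((N:ℝ)-1)/2, π^2*A^2*(N:ℝ)^2*((N:ℝ)-1)*(2*(N:ℝ)-1)/3,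
           π^2*A^2*(N:ℝ)^2*((N:ℝ)-1)^2/2;
         0, 0, π*A^2*(N:ℝ)^2*((N:ℝ)-1)/2, π^2*A^2*(N:ℝ)^2*((N:ℝ)-1)^2/2,
           π^2*A^2*(N:ℝ)^2*((N:ℝ)-1)*(2*(N:ℝ)-1)/3]) :
    η⁻¹ 0 0 = 2*σ^2/(N:ℝ)^2 ∧
    η⁻¹ 1 1 = σ^2/(N:ℝ)^2 ∧
    η⁻¹ 2 2 = 2*(7*(N:ℝ)-5)*σ^2/(A^2*(N:ℝ)^2*((N:ℝ)+1)) ∧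
    η⁻¹ 3 3 = 6*σ^2/(π^2*A^2*(N:ℝ)^2*((N:ℝ)^2-1)) ∧
    η⁻¹ 4 4 = 6*σ^2/(π^2*A^2*(N:ℝ)^2*((N:ℝ)^2-1)) := by
  have hNR : (2:ℝ) ≤ (N:ℝ) := by exact_mod_cast hN
  have hN0 : (N:ℝ) ≠ 0 := by linarith
  have hNm1 : (N:ℝ) - 1 ≠ 0 := by intro h; nlinarith
  have hNp1 : (N:ℝ) + 1 ≠ 0 := by intro h; nlinarith
  have hN2 : (N:ℝ)^2 - 1 ≠ 0 := by
    intro h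
    have : ((N:ℝ) - 1) * ((N:ℝ) + 1) = 0 := by ring_nf; linarith [h]
    rcases mul_eq_zero.1 this with h1 | h1
    · exact hNm1 h1
    · exact hNp1 h1
  have hA0 : A ≠ 0 := ne_of_gt hA
  have hσ0 : σ ≠ 0 := ne_of_gt hσ
  have hπ : π ≠ 0 := Real.pi_ne_zero
  have hmul : η *
      !![2*σ^2/(N:ℝ)^2, 0, 0, 0, 0;
         0, σ^2/(N:ℝ)^2, 0, 0, 0;
         0, 0, 2*(7*(N:ℝ)-5)*σ^2/(A^2*(N:ℝ)^2*((N:ℝ)+1)),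
           -(6*σ^2)/(π*A^2*(N:ℝ)^2*((N:ℝ)+1)), -(6*σ^2)/(π*A^2*(N:ℝ)^2*((N:ℝ)+1));
         0, 0, -(6*σ^2)/(π*A^2*(N:ℝ)^2*((N:ℝ)+1)),
           6*σ^2/(π^2*A^2*(N:ℝ)^2*((N:ℝ)^2-1)), 0;
         0, 0, -(6*σ^2)/(π*A^2*(N:ℝ)^2*((N:ℝ)+1)),
           0, 6*σ^2/(π^2*A^2*(N:ℝ)^2*((N:ℝ)^2-1))] = 1 := by
    subst hη
    ext i j
    fin_cases i <;> fin_cases j <;>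
      · simp [Matrix.mul_apply, Fin.sum_univ_five, Matrix.one_apply, Matrix.vecHead, Matrix.vecTail, Function.comp]
        try field_simp
        try ring
  have hinv := Matrix.inv_eq_right_inv hmul
  rw [hinv]
  refine ⟨rfl, rfl, rfl, rfl, rfl⟩
end
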